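/- The supremum in the definition of degeneracy is attained: the K_{δ(w)}(w)-core is nonempty, and δ(w) = max{κ : K_κ(w) ≠ ∅} = max{δ_x(w) : x ∈ [0,1]}. -/

import Mathlib

open MeasureTheory Set Filter

/-- A graphon: symmetric measurable `w : [0,1]² → [0,1]` (stated on all of ℝ²). -/
def Graphon (w : ℝ → ℝ → ℝ) : Prop :=
  Measurable (Function.uncurry w) ∧ (∀ x y, w x y = w y x) ∧
    ∀ x y, w x y ∈ Set.Icc (0 : ℝ) 1

/-- Degree of `x` restricted to `K`: `d_w^K(x) = ∫_K w(x,y) dy`. -/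
noncomputable def degK (w : ℝ → ℝ → ℝ) (K : Set ℝ) (x : ℝ) : ℝ := ∫ y in K, w x y

/-- Iterated peeling sets: `coreIter w κ n = K^{n+1}_κ(w)` (so index 0 is `K¹`). -/
noncomputable def coreIter (w : ℝ → ℝ → ℝ) (κ : ℝ) : ℕ → Set ℝ
  | 0 => {x ∈ Set.Icc (0 : ℝ) 1 | κ ≤ degK w (Set.Icc 0 1) x}
  | n + 1 => {x ∈ coreIter w κ n | κ ≤ degK w (coreIter w κ n) x}

/-- The κ-core `K_κ(w) = ⋂ₙ K^n_κ(w)`. -/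
noncomputable def core (w : ℝ → ℝ → ℝ) (κ : ℝ) : Set ℝ := ⋂ n, coreIter w κ n

/-- Shell index `δ_x(w) = sup {κ : x ∈ K_κ(w)}`. -/
noncomputable def shell (w : ℝ → ℝ → ℝ) (x : ℝ) : ℝ := sSup {κ | x ∈ core w κ}

/-- Degeneracy `δ(w) = sup {κ : |K_κ(w)| > 0}`. -/
noncomputable def degen (w : ℝ → ℝ → ℝ) : ℝ := sSup {κ | 0 < volume (core w κ)}

/-- Cut-norm distance `d_□`. -/
noncomputable def cutDist (w w' : ℝ → ℝ → ℝ) : ℝ :=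
  sSup {r | ∃ S T : Set ℝ, MeasurableSet S ∧ MeasurableSet T ∧
    S ⊆ Set.Icc 0 1 ∧ T ⊆ Set.Icc 0 1 ∧
    r = |∫ x in S, ∫ y in T, (w x y - w' x y)|}

/-- A measure-preserving map of `[0,1]`. -/
def MPMap (σ : ℝ → ℝ) : Prop :=
  Measurable σ ∧ Set.MapsTo σ (Set.Icc 0 1) (Set.Icc 0 1) ∧
    ∀ A : Set ℝ, MeasurableSet A → A ⊆ Set.Icc 0 1 →
      volume (σ ⁻¹' A ∩ Set.Icc 0 1) = volume A

/-- Cut metric `δ_□(w,w') = inf_σ d_□(w^σ, w')`. -/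
noncomputable def cutMetric (w w' : ℝ → ℝ → ℝ) : ℝ :=
  sInf {r | ∃ σ : ℝ → ℝ, MPMap σ ∧ r = cutDist (fun x y => w (σ x) (σ y)) w'}

open Topology
section GraphonAux

variable {w : ℝ → ℝ → ℝ}

lemma grw_meas (hw : Graphon w) (x : ℝ) : Measurable (w x) :=
  hw.1.of_uncurry_left

lemma grw_int (hw : Graphon w) (x : ℝ) {K : Set ℝ} (hK1 : K ⊆ Set.Icc 0 1) :
    IntegrableOn (w x) K := by
  have h : IntegrableOn (w x) (Set.Icc 0 1) := by
    refine Measure.integrableOn_of_bounded (by simp) (grw_meas hw x).aestronglyMeasurable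
      (M := 1) ?_
    filter_upwards with y
    rw [Real.norm_eq_abs, abs_le]
    exact ⟨by linarith [(hw.2.2 x y).1], (hw.2.2 x y).2⟩
  exact h.mono_set hK1

lemma degK_nonneg (hw : Graphon w) {K : Set ℝ} (hK : MeasurableSet K) (x : ℝ) :
    0 ≤ degK w K x :=
  setIntegral_nonneg hK fun y _ => (hw.2.2 x y).1

lemma degK_le_vol (hw : Graphon w) {K : Set ℝ} (hK : MeasurableSet K)
    (hK1 : K ⊆ Set.Icc 0 1) (x : ℝ) : degK w K x ≤ (volume K).toReal := by
  have h1 : degK w K x ≤ ∫ _ in K, (1 : ℝ) :=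
    setIntegral_mono_on (grw_int hw x hK1) (by
      refine Measure.integrableOn_of_bounded (ne_top_of_le_ne_top (by simp)
        (measure_mono hK1)) aestronglyMeasurable_const (M := 1) ?_
      filter_upwards with y; simp) hK fun y _ => (hw.2.2 x y).2
  exact (by simpa using h1 : degK w K x ≤ volume.real K)

lemma degK_mono (hw : Graphon w) {K K' : Set ℝ} (hK'1 : K' ⊆ Set.Icc 0 1)
    (hKK' : K ⊆ K') (x : ℝ) : degK w K x ≤ degK w K' x :=
  setIntegral_mono_set (grw_int hw x hK'1)
    (Filter.Eventually.of_forall fun y => (hw.2.2 x y).1)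
    (HasSubset.Subset.eventuallyLE hKK')

lemma degK_meas (hw : Graphon w) {K : Set ℝ} (hK : MeasurableSet K) :
    Measurable (degK w K) := by
  have h1 : (fun p : ℝ × ℝ => K.indicator (w p.1) p.2)
      = (Prod.snd ⁻¹' K).indicator (Function.uncurry w) := by
    ext p
    by_cases h : p.2 ∈ K <;> simp [Set.indicator, h, Function.uncurry]
  have h3 : StronglyMeasurable fun p : ℝ × ℝ => K.indicator (w p.1) p.2 := by
    rw [h1]; exact (hw.1.indicator (measurable_snd hK)).stronglyMeasurable
  have h4 := h3.integral_prod_right' (ν := volume)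
  have h5 : (fun x => ∫ y, K.indicator (w x) y) = degK w K := by
    ext x
    rw [integral_indicator hK]; rfl
  rw [← h5]
  exact h4.measurable

lemma coreIter_subset_Icc (hw : Graphon w) (κ : ℝ) :
    ∀ n, coreIter w κ n ⊆ Set.Icc 0 1 := by
  intro n
  induction n with
  | zero => exact fun x hx => hx.1
  | succ n ih => exact fun x hx => ih hx.1

lemma coreIter_meas (hw : Graphon w) (κ : ℝ) :
    ∀ n, MeasurableSet (coreIter w κ n) := by
  intro n
  induction n with
  | zero =>
    exact measurableSet_Icc.inter ((degK_meas hw measurableSet_Icc) measurableSet_Ici)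
  | succ n ih =>
    exact ih.inter ((degK_meas hw ih) measurableSet_Ici)

lemma coreIter_anti (hw : Graphon w) (κ : ℝ) : Antitone (coreIter w κ) := by
  refine antitone_nat_of_succ_le fun n => ?_
  exact fun x hx => hx.1

lemma coreIter_anti_kappa (hw : Graphon w) {κ κ' : ℝ} (h : κ ≤ κ') :
    ∀ n, coreIter w κ' n ⊆ coreIter w κ n := by
  intro n
  induction n with
  | zero => exact fun x hx => ⟨hx.1, le_trans h hx.2⟩
  | succ n ih =>
    intro x hx
    refine ⟨ih hx.1, ?_⟩
    calc κ ≤ κ' := h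
      _ ≤ degK w (coreIter w κ' n) x := hx.2
      _ ≤ degK w (coreIter w κ n) x :=
        degK_mono hw (coreIter_subset_Icc hw κ n) ih x

lemma core_subset_Icc (hw : Graphon w) (κ : ℝ) : core w κ ⊆ Set.Icc 0 1 :=
  (Set.iInter_subset _ 0).trans (coreIter_subset_Icc hw κ 0)

lemma core_meas (hw : Graphon w) (κ : ℝ) : MeasurableSet (core w κ) :=
  MeasurableSet.iInter (coreIter_meas hw κ)

lemma core_anti (hw : Graphon w) {κ κ' : ℝ} (h : κ ≤ κ') : core w κ' ⊆ core w κ :=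
  Set.iInter_mono fun n => coreIter_anti_kappa hw h n

lemma core_nonpos (hw : Graphon w) {κ : ℝ} (h : κ ≤ 0) :
    core w κ = Set.Icc 0 1 := by
  have key : ∀ n, coreIter w κ n = Set.Icc 0 1 := by
    intro n
    induction n with
    | zero =>
      ext x
      exact ⟨fun hx => hx.1, fun hx => ⟨hx, h.trans (degK_nonneg hw measurableSet_Icc x)⟩⟩
    | succ n ih =>
      show {x ∈ coreIter w κ n | κ ≤ degK w (coreIter w κ n) x} = _
      rw [ih]
      ext x
      exact ⟨fun hx => hx.1, fun hx => ⟨hx, h.trans (degK_nonneg hw measurableSet_Icc x)⟩⟩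
  simp only [core, key, Set.iInter_const]

lemma degK_tendsto (hw : Graphon w) {A : ℕ → Set ℝ} (hA : ∀ n, MeasurableSet (A n))
    (hanti : Antitone A) (hsub : A 0 ⊆ Set.Icc 0 1) (x : ℝ) :
    Tendsto (fun n => degK w (A n) x) atTop (𝓝 (degK w (⋂ n, A n) x)) :=
  tendsto_setIntegral_of_antitone hA hanti ⟨0, grw_int hw x hsub⟩

lemma core_vol_ge (hw : Graphon w) {κ : ℝ} (hne : (core w κ).Nonempty) :
    ENNReal.ofReal κ ≤ volume (core w κ) := by
  obtain ⟨x, hx⟩ := hne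
  have h1 : ∀ n, κ ≤ degK w (coreIter w κ n) x := by
    intro n
    have := Set.mem_iInter.1 hx (n + 1)
    exact this.2
  have h2 : Tendsto (fun n => degK w (coreIter w κ n) x) atTop
      (𝓝 (degK w (core w κ) x)) :=
    degK_tendsto hw (coreIter_meas hw κ) (coreIter_anti hw κ)
      (coreIter_subset_Icc hw κ 0) x
  have h3 : κ ≤ degK w (core w κ) x := ge_of_tendsto' h2 h1
  have h4 : degK w (core w κ) x ≤ (volume (core w κ)).toReal :=
    degK_le_vol hw (core_meas hw κ) (core_subset_Icc hw κ) x
  exact ENNReal.ofReal_le_of_le_toReal (h3.trans h4)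

lemma core_empty_of_one_lt (hw : Graphon w) {κ : ℝ} (h : 1 < κ) :
    core w κ = ∅ := by
  refine Set.eq_empty_of_subset_empty ((Set.iInter_subset _ 0).trans ?_)
  intro x hx
  have h1 : degK w (Set.Icc 0 1) x ≤ 1 := by
    have := degK_le_vol hw measurableSet_Icc subset_rfl x
    simpa using this
  exact absurd (hx.2.trans h1) (not_le.2 h)

lemma coreIter_iInter (hw : Graphon w) {κ : ℝ} {c : ℕ → ℝ} (hmono : Monotone c)
    (hlt : ∀ j, c j ≤ κ) (hlim : Tendsto c atTop (𝓝 κ)) :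
    ∀ n, coreIter w κ n = ⋂ j, coreIter w (c j) n := by
  intro n
  induction n with
  | zero =>
    ext x
    simp only [Set.mem_iInter]
    constructor
    · intro hx j
      exact coreIter_anti_kappa hw (hlt j) 0 hx
    · intro hx
      refine ⟨(hx 0).1, ?_⟩
      exact le_of_tendsto hlim (Filter.Eventually.of_forall fun j => (hx j).2)
  | succ n ih =>
    apply Set.Subset.antisymm
    · exact Set.subset_iInter fun j => coreIter_anti_kappa hw (hlt j) (n + 1)
    · intro x hx
      rw [Set.mem_iInter] at hx
      have hxn : x ∈ coreIter w κ n := by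
        rw [ih, Set.mem_iInter]
        exact fun j => (hx j).1
      refine ⟨hxn, ?_⟩
      have hanti : Antitone fun j => coreIter w (c j) n :=
        fun i j hij => coreIter_anti_kappa hw (hmono hij) n
      have ht : Tendsto (fun j => degK w (coreIter w (c j) n) x) atTop
          (𝓝 (degK w (⋂ j, coreIter w (c j) n) x)) :=
        degK_tendsto hw (fun j => coreIter_meas hw (c j) n) hanti
          (coreIter_subset_Icc hw (c 0) n) x
      rw [← ih] at ht
      exact le_of_tendsto_of_tendsto' hlim ht fun j => (hx j).2

lemma core_iInter (hw : Graphon w) {κ : ℝ} {c : ℕ → ℝ} (hmono : Monotone c)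
    (hlt : ∀ j, c j ≤ κ) (hlim : Tendsto c atTop (𝓝 κ)) :
    core w κ = ⋂ j, core w (c j) := by
  have h := coreIter_iInter hw hmono hlt hlim
  calc core w κ = ⋂ n, ⋂ j, coreIter w (c j) n := Set.iInter_congr h
    _ = ⋂ j, ⋂ n, coreIter w (c j) n := Set.iInter_comm _
    _ = ⋂ j, core w (c j) := rfl

lemma degen_mem_set (hw : Graphon w) : (0 : ℝ) ∈ {κ | 0 < volume (core w κ)} := by
  have : core w 0 = Set.Icc 0 1 := core_nonpos hw le_rfl
  simp [Set.mem_setOf_eq, this]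

lemma degen_bddAbove (hw : Graphon w) : BddAbove {κ | 0 < volume (core w κ)} := by
  refine ⟨1, fun κ hκ => ?_⟩
  by_contra h
  have hκ' : 0 < volume (core w κ) := hκ
  rw [core_empty_of_one_lt hw (not_le.1 h)] at hκ'
  simp at hκ'

lemma degen_nonneg (hw : Graphon w) : 0 ≤ degen w :=
  le_csSup (degen_bddAbove hw) (degen_mem_set hw)

lemma core_degen_nonempty (hw : Graphon w) : (core w (degen w)).Nonempty := by
  rcases eq_or_lt_of_le (degen_nonneg hw) with h0 | h0
  · rw [← h0, core_nonpos hw le_rfl]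
    exact ⟨0, by simp⟩
  · set δ := degen w with hδ
    set c : ℕ → ℝ := fun j => δ - δ / (2 * (j + 1)) with hc
    have hcpos : ∀ j, δ / 2 ≤ c j := by
      intro j
      have hj : (0:ℝ) ≤ (j:ℝ) := Nat.cast_nonneg j
      have h1 : δ / (2 * ((j : ℝ) + 1)) ≤ δ / 2 := by
        gcongr
        linarith
      simp only [hc]
      linarith
    have hclt : ∀ j, c j < δ := by
      intro j
      have : 0 < δ / (2 * ((j : ℝ) + 1)) := by positivity
      simp only [hc]; linarith
    have hmono : Monotone c := by
      intro i j hij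
      simp only [hc]
      have hij' : (i : ℝ) ≤ (j : ℝ) := Nat.cast_le.2 hij
      have hi : (0:ℝ) < 2 * ((i:ℝ) + 1) := by positivity
      have h1 : δ / (2 * ((j : ℝ) + 1)) ≤ δ / (2 * ((i : ℝ) + 1)) := by
        gcongr
      linarith
    have hlim : Tendsto c atTop (𝓝 δ) := by
      have h1 : Tendsto (fun j : ℕ => δ / (2 * ((j : ℝ) + 1))) atTop (𝓝 0) := by
        apply Tendsto.div_atTop tendsto_const_nhds
        apply Filter.Tendsto.const_mul_atTop (by norm_num : (0:ℝ) < 2)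
        exact tendsto_atTop_add_const_right _ _ tendsto_natCast_atTop_atTop
      have h2 : Tendsto (fun j : ℕ => δ - δ / (2 * ((j:ℝ) + 1))) atTop (𝓝 (δ - 0)) :=
        tendsto_const_nhds.sub h1
      simpa [hc] using h2
    have hne : ∀ j, (core w (c j)).Nonempty := by
      intro j
      obtain ⟨κ', hκ'S, hκ'⟩ := exists_lt_of_lt_csSup ⟨0, degen_mem_set hw⟩
        (show c j < degen w from hclt j)
      have hsub : core w κ' ⊆ core w (c j) := core_anti hw hκ'.le
      have hpos : 0 < volume (core w (c j)) := lt_of_lt_of_le hκ'S (measure_mono hsub)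
      exact nonempty_of_measure_ne_zero hpos.ne'
    have hvol : ∀ j, ENNReal.ofReal (δ / 2) ≤ volume (core w (c j)) := by
      intro j
      refine le_trans ?_ (core_vol_ge hw (hne j))
      exact ENNReal.ofReal_le_ofReal (hcpos j)
    have hiInter : core w δ = ⋂ j, core w (c j) :=
      core_iInter hw hmono (fun j => (hclt j).le) hlim
    have htend : Tendsto (fun j => volume (core w (c j))) atTop
        (𝓝 (volume (⋂ j, core w (c j)))) := by
      refine tendsto_measure_iInter_atTop
        (fun j => (core_meas hw (c j)).nullMeasurableSet)
        (fun i j hij => core_anti hw (hmono hij)) ⟨0, ?_⟩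
      exact ne_top_of_le_ne_top (by simp) (measure_mono (core_subset_Icc hw _))
    have hpos : ENNReal.ofReal (δ / 2) ≤ volume (core w δ) := by
      rw [hiInter]
      exact ge_of_tendsto' htend hvol
    have hpos' : 0 < volume (core w δ) := by
      refine lt_of_lt_of_le ?_ hpos
      rw [ENNReal.ofReal_pos]
      linarith
    exact nonempty_of_measure_ne_zero hpos'.ne'

lemma degen_ub (hw : Graphon w) {κ : ℝ} (h : (core w κ).Nonempty) : κ ≤ degen w := by
  rcases le_or_gt κ 0 with h0 | h0
  · exact h0.trans (degen_nonneg hw)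
  · have := core_vol_ge hw h
    have hmem : κ ∈ {κ | 0 < volume (core w κ)} := by
      refine lt_of_lt_of_le ?_ this
      simpa using h0
    exact le_csSup (degen_bddAbove hw) hmem

end GraphonAux

theorem stmt11 (w : ℝ → ℝ → ℝ) (hw : Graphon w) :
    (core w (degen w)).Nonempty ∧
    IsGreatest {κ | (core w κ).Nonempty} (degen w) ∧
    IsGreatest {d | ∃ x ∈ Set.Icc (0 : ℝ) 1, shell w x = d} (degen w) := by
  have hne := core_degen_nonempty hw
  have hgr : IsGreatest {κ | (core w κ).Nonempty} (degen w) :=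
    ⟨hne, fun κ hκ => degen_ub hw hκ⟩
  refine ⟨hne, hgr, ?_, ?_⟩
  · obtain ⟨x, hx⟩ := hne
    refine ⟨x, core_subset_Icc hw _ hx, ?_⟩
    show sSup {κ | x ∈ core w κ} = degen w
    refine IsGreatest.csSup_eq ⟨hx, fun κ hκ => degen_ub hw ⟨x, hκ⟩⟩
  · rintro d ⟨x, hxI, rfl⟩
    show sSup {κ | x ∈ core w κ} ≤ degen w
    refine csSup_le ⟨0, ?_⟩ fun κ hκ => degen_ub hw ⟨x, hκ⟩
    show x ∈ core w 0
    rw [core_nonpos hw le_rfl]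
    exact hxI
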